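/- Let ξ(s) = (t(s), r(s), φ(s), ψ(s)) be a C² curve with values in Ω_sph, defined on an interval I, satisfying the geodesic equations of the Schwarzschild metric. Then the functions a(s) := (1 − R/r(s))·ṫ(s) and b(s) := r(s)²·U(s), where U(s) := √(φ̇(s)² + sin²φ(s)·ψ̇(s)²), are constant on I. -/

import Mathlib

noncomputable section

/-- Partial derivative of `f` in the `i`-th coordinate direction at `p`. -/
def coordPDeriv {n : ℕ} (f : (Fin n → ℝ) → ℝ) (i : Fin n) (p : Fin n → ℝ) : ℝ :=
  fderiv ℝ f p (Pi.single i 1)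

/-- Christoffel symbols `Γ^k_{ij}` of a metric `g` given in coordinates on (an open
subset of) `ℝⁿ`: `Γ^k_{ij} = (1/2) Σ_l g^{kl} (∂_i g_{jl} + ∂_j g_{il} − ∂_l g_{ij})`. -/
def christoffel {n : ℕ} (g : (Fin n → ℝ) → Matrix (Fin n) (Fin n) ℝ)
    (k i j : Fin n) (p : Fin n → ℝ) : ℝ :=
  (1 / 2) * ∑ l, (g p)⁻¹ k l *
    (coordPDeriv (fun q => g q j l) i p + coordPDeriv (fun q => g q i l) j p
      - coordPDeriv (fun q => g q i j) l p)

/-- The Schwarzschild metric in spherical coordinates `(t, r, φ, ψ)`. -/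
def schwMetric (R : ℝ) (p : Fin 4 → ℝ) : Matrix (Fin 4) (Fin 4) ℝ :=
  Matrix.diagonal
    ![1 - R / p 1, -(1 - R / p 1)⁻¹, -(p 1) ^ 2, -(p 1) ^ 2 * Real.sin (p 2) ^ 2]

/-- The coordinate chart `Ω_sph = {(t,r,φ,ψ) : r > R, 0 < φ < π}`. -/
def sphDomain (R : ℝ) : Set (Fin 4 → ℝ) :=
  {p | R < p 1 ∧ 0 < p 2 ∧ p 2 < Real.pi}

/-! The Schwarzschild metric is diagonal, and for a diagonal metric `diag(d)` the `k`-th geodesic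
equation is the Euler–Lagrange equation `d/ds (d_k ξ̇ᵏ) = ½ Σᵢ ∂ₖdᵢ (ξ̇ⁱ)²`. The metric does not
depend on `t` or `ψ`, so the momenta `p_t = (1 - R/r) ṫ` and `p_ψ = -r² sin²φ ψ̇` are conserved,
while `p_φ = -r² φ̇` satisfies `ṗ_φ = -r² sin φ cos φ ψ̇²`. Hence `b² = p_φ² + p_ψ² / sin²φ` has
zero derivative. -/

open Matrix

section Diagonal

variable {n : ℕ}

theorem fderiv_apply_eq_sum_coordPDeriv (f : (Fin n → ℝ) → ℝ) (p v : Fin n → ℝ) :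
    fderiv ℝ f p v = ∑ i, coordPDeriv f i p * v i := by
  conv_lhs => rw [← Finset.univ_sum_single v, map_sum]
  refine Finset.sum_congr rfl fun i _ => ?_
  rw [coordPDeriv, mul_comm, ← smul_eq_mul (v i), ← map_smul, ← Pi.single_smul', smul_eq_mul,
    mul_one]

theorem coordPDeriv_eq_deriv_update {f : (Fin n → ℝ) → ℝ} {p : Fin n → ℝ}
    (hf : DifferentiableAt ℝ f p) (i : Fin n) :
    coordPDeriv f i p = deriv (fun x => f (Function.update p i x)) (p i) :=
  (hf.hasFDerivAt.comp_hasDerivAt_of_eq (p i) (hasDerivAt_update p i (p i))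
    (Function.update_eq_self i p).symm).deriv.symm

theorem coordPDeriv_eq_zero_of_update {f : (Fin n → ℝ) → ℝ} {i : Fin n}
    (hf : ∀ q x, f (Function.update q i x) = f q) (p : Fin n → ℝ) : coordPDeriv f i p = 0 := by
  by_cases hd : DifferentiableAt ℝ f p
  · simp [coordPDeriv_eq_deriv_update hd, hf]
  · simp [coordPDeriv, fderiv_zero_of_not_differentiableAt hd]

theorem coordPDeriv_diagonal (d : (Fin n → ℝ) → Fin n → ℝ) (i j l : Fin n) (p : Fin n → ℝ) :
    coordPDeriv (fun q => diagonal (d q) j l) i p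
      = if j = l then coordPDeriv (fun q => d q j) i p else 0 := by
  by_cases h : j = l
  · subst h; simp
  · simp [h, coordPDeriv]

theorem inv_diagonal_of_ne_zero {K ι : Type*} [Field K] [Fintype ι] [DecidableEq ι] {v : ι → K}
    (hv : ∀ m, v m ≠ 0) :
    (diagonal v)⁻¹ = diagonal v⁻¹ := by
  apply inv_eq_right_inv
  rw [diagonal_mul_diagonal, ← diagonal_one]
  congr 1
  funext m
  exact mul_inv_cancel₀ (hv m)

theorem christoffel_diagonal {d : (Fin n → ℝ) → Fin n → ℝ} {p : Fin n → ℝ}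
    (hd : ∀ m, d p m ≠ 0) (k i j : Fin n) :
    christoffel (fun q => diagonal (d q)) k i j p
      = (d p k)⁻¹ / 2 * ((if j = k then coordPDeriv (fun q => d q k) i p else 0)
          + (if i = k then coordPDeriv (fun q => d q k) j p else 0)
          - (if i = j then coordPDeriv (fun q => d q i) k p else 0)) := by
  simp only [christoffel, coordPDeriv_diagonal]
  simp only [inv_diagonal_of_ne_zero hd, diagonal_apply, ite_mul, zero_mul, Finset.sum_ite_eq,
    Finset.mem_univ, if_true, Pi.inv_apply]
  split_ifs <;> subst_vars <;> ring

theorem sum_christoffel_diagonal {d : (Fin n → ℝ) → Fin n → ℝ} {p : Fin n → ℝ}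
    (hd : ∀ m, d p m ≠ 0) (k : Fin n) (v : Fin n → ℝ) :
    ∑ i, ∑ j, christoffel (fun q => diagonal (d q)) k i j p * v i * v j
      = (d p k)⁻¹ * ((∑ i, coordPDeriv (fun q => d q k) i p * v i) * v k
          - (1 / 2) * ∑ i, coordPDeriv (fun q => d q i) k p * v i ^ 2) := by
  simp only [christoffel_diagonal hd, mul_add, mul_sub, add_mul, sub_mul, mul_ite, ite_mul,
    mul_zero, zero_mul, Finset.sum_add_distrib, Finset.sum_sub_distrib, Finset.sum_ite_eq',
    Finset.sum_ite_eq, Finset.mem_univ, if_true, Finset.sum_ite_irrel, Finset.sum_const_zero]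
  simp only [Finset.mul_sum, Finset.sum_mul, ← Finset.sum_add_distrib, ← Finset.sum_sub_distrib]
  exact Finset.sum_congr rfl fun i _ => by ring

theorem hasDerivWithinAt_momentum_of_geodesic_diagonal {d : (Fin n → ℝ) → Fin n → ℝ}
    {I : Set ℝ} {ξ ξ' ξ'' : ℝ → Fin n → ℝ} {s : ℝ} {k : Fin n}
    (hd : ∀ m, d (ξ s) m ≠ 0) (hdk : DifferentiableAt ℝ (fun q => d q k) (ξ s))
    (hξ' : HasDerivWithinAt ξ (ξ' s) I s) (hξ'' : HasDerivWithinAt ξ' (ξ'' s) I s)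
    (hgeo : ξ'' s k + ∑ i, ∑ j,
      christoffel (fun q => diagonal (d q)) k i j (ξ s) * ξ' s i * ξ' s j = 0) :
    HasDerivWithinAt (fun s => d (ξ s) k * ξ' s k)
      ((1 / 2) * ∑ i, coordPDeriv (fun q => d q i) k (ξ s) * ξ' s i ^ 2) I s := by
  have hdξ : HasDerivWithinAt (fun s => d (ξ s) k) _ I s :=
    hdk.hasFDerivAt.comp_hasDerivWithinAt s hξ'
  rw [fderiv_apply_eq_sum_coordPDeriv] at hdξ
  refine (hdξ.mul (hasDerivWithinAt_pi.mp hξ'' k)).congr_deriv ?_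
  rw [sum_christoffel_diagonal hd] at hgeo
  linear_combination d (ξ s) k * hgeo
    - ((∑ i, coordPDeriv (fun q => d q k) i (ξ s) * ξ' s i) * ξ' s k
      - 1 / 2 * ∑ i, coordPDeriv (fun q => d q i) k (ξ s) * ξ' s i ^ 2) * mul_inv_cancel₀ (hd k)

end Diagonal

theorem Set.OrdConnected.eq_of_hasDerivWithinAt_zero {E : Type*} [NormedAddCommGroup E]
    [NormedSpace ℝ E] {I : Set ℝ} (hI : I.OrdConnected) {f : ℝ → E}
    (hf : ∀ s ∈ I, HasDerivWithinAt f 0 I s) {s s' : ℝ} (hs : s ∈ I) (hs' : s' ∈ I) :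
    f s = f s' := by
  have h := hI.convex.norm_image_sub_le_of_norm_hasDerivWithin_le (C := 0) hf (by simp) hs hs'
  rw [zero_mul, norm_le_zero_iff, sub_eq_zero] at h
  exact h.symm

section Schwarzschild

open Real

variable {R : ℝ} {p : Fin 4 → ℝ}

/-- `schwMetric R p` is `diagonal (schwDiag R p)` by definition; the Schwarzschild lemmas below
feed `schwMetric` to the diagonal-metric lemmas through this defeq. -/
def schwDiag (R : ℝ) (p : Fin 4 → ℝ) : Fin 4 → ℝ :=
  ![1 - R / p 1, -(1 - R / p 1)⁻¹, -(p 1) ^ 2, -(p 1) ^ 2 * sin (p 2) ^ 2]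

theorem ne_zero_of_mem_sphDomain (hR : 0 < R) (hp : p ∈ sphDomain R) :
    p 1 ≠ 0 ∧ 1 - R / p 1 ≠ 0 ∧ sin (p 2) ≠ 0 := by
  obtain ⟨hRr, hφ, hφπ⟩ := hp
  have hr : 0 < p 1 := hR.trans hRr
  exact ⟨hr.ne', (sub_pos.mpr ((div_lt_one hr).mpr hRr)).ne',
    (sin_pos_of_pos_of_lt_pi hφ hφπ).ne'⟩

theorem schwDiag_ne_zero (hr : p 1 ≠ 0) (hu : 1 - R / p 1 ≠ 0) (hsin : sin (p 2) ≠ 0)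
    (m : Fin 4) : schwDiag R p m ≠ 0 := by
  fin_cases m <;> simp [schwDiag, *]

theorem differentiableAt_schwDiag (hr : p 1 ≠ 0) (hu : 1 - R / p 1 ≠ 0) (m : Fin 4) :
    DifferentiableAt ℝ (fun q => schwDiag R q m) p := by
  fin_cases m <;> simp only [schwDiag, Fin.zero_eta, Fin.mk_one, Fin.reduceFinMk, cons_val] <;>
    fun_prop (disch := assumption)

theorem schwDiag_update_of_ne {k : Fin 4} (hk1 : k ≠ 1) (hk2 : k ≠ 2) (q : Fin 4 → ℝ) (x : ℝ) :
    schwDiag R (Function.update q k x) = schwDiag R q := by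
  simp [schwDiag, Function.update_of_ne hk1.symm, Function.update_of_ne hk2.symm]

theorem schwDiag_update_two_of_ne {i : Fin 4} (hi : i ≠ 3) (q : Fin 4 → ℝ) (x : ℝ) :
    schwDiag R (Function.update q 2 x) i = schwDiag R q i := by
  fin_cases i <;> simp_all [schwDiag]

theorem coordPDeriv_schwDiag_of_ne {k : Fin 4} (hk1 : k ≠ 1) (hk2 : k ≠ 2) (i : Fin 4) :
    coordPDeriv (fun q => schwDiag R q i) k p = 0 :=
  coordPDeriv_eq_zero_of_update (fun q x => by rw [schwDiag_update_of_ne hk1 hk2]) p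

theorem coordPDeriv_two_schwDiag_of_ne {i : Fin 4} (hi : i ≠ 3) :
    coordPDeriv (fun q => schwDiag R q i) 2 p = 0 :=
  coordPDeriv_eq_zero_of_update (schwDiag_update_two_of_ne hi) p

theorem coordPDeriv_two_schwDiag_three :
    coordPDeriv (fun q => schwDiag R q 3) 2 p = -(p 1) ^ 2 * (2 * sin (p 2) * cos (p 2)) := by
  rw [coordPDeriv_eq_deriv_update (by simp only [schwDiag, cons_val]; fun_prop)]
  simp [schwDiag]

theorem hasDerivWithinAt_schw_energy {I : Set ℝ} {ξ ξ' ξ'' : ℝ → Fin 4 → ℝ} {s : ℝ}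
    (hR : 0 < R) (hmem : ξ s ∈ sphDomain R)
    (hξ' : HasDerivWithinAt ξ (ξ' s) I s) (hξ'' : HasDerivWithinAt ξ' (ξ'' s) I s)
    (hgeo : ξ'' s 0 + ∑ i, ∑ j, christoffel (schwMetric R) 0 i j (ξ s) * ξ' s i * ξ' s j = 0) :
    HasDerivWithinAt (fun s => (1 - R / ξ s 1) * ξ' s 0) 0 I s := by
  obtain ⟨hr, hu, hsin⟩ := ne_zero_of_mem_sphDomain hR hmem
  have h := hasDerivWithinAt_momentum_of_geodesic_diagonal
    (schwDiag_ne_zero hr hu hsin) (differentiableAt_schwDiag hr hu 0) hξ' hξ'' hgeo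
  simp (disch := decide) only [coordPDeriv_schwDiag_of_ne, zero_mul, Finset.sum_const_zero,
    mul_zero] at h
  exact h

def schwAngularMomentumSq (R : ℝ) (p v : Fin 4 → ℝ) : ℝ :=
  (schwDiag R p 2 * v 2) ^ 2 + (schwDiag R p 3 * v 3) ^ 2 / sin (p 2) ^ 2

theorem sq_mul_sqrt_eq_sqrt_schwAngularMomentumSq (v : Fin 4 → ℝ) :
    p 1 ^ 2 * √(v 2 ^ 2 + sin (p 2) ^ 2 * v 3 ^ 2) = √(schwAngularMomentumSq R p v) := by
  have h : schwAngularMomentumSq R p v = (p 1 ^ 2) ^ 2 * (v 2 ^ 2 + sin (p 2) ^ 2 * v 3 ^ 2) := by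
    simp only [schwAngularMomentumSq, schwDiag, cons_val]
    field_simp
  rw [h, sqrt_mul (by positivity), sqrt_sq (by positivity)]

theorem hasDerivWithinAt_schwAngularMomentumSq {I : Set ℝ} {ξ ξ' ξ'' : ℝ → Fin 4 → ℝ} {s : ℝ}
    (hR : 0 < R) (hmem : ξ s ∈ sphDomain R)
    (hξ' : HasDerivWithinAt ξ (ξ' s) I s) (hξ'' : HasDerivWithinAt ξ' (ξ'' s) I s)
    (hgeo : ∀ k, ξ'' s k + ∑ i, ∑ j,
      christoffel (schwMetric R) k i j (ξ s) * ξ' s i * ξ' s j = 0) :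
    HasDerivWithinAt (fun s => schwAngularMomentumSq R (ξ s) (ξ' s)) 0 I s := by
  obtain ⟨hr, hu, hsin⟩ := ne_zero_of_mem_sphDomain hR hmem
  have hpφ := hasDerivWithinAt_momentum_of_geodesic_diagonal (k := 2)
    (schwDiag_ne_zero hr hu hsin) (differentiableAt_schwDiag hr hu 2) hξ' hξ'' (hgeo 2)
  have hpψ := hasDerivWithinAt_momentum_of_geodesic_diagonal (k := 3)
    (schwDiag_ne_zero hr hu hsin) (differentiableAt_schwDiag hr hu 3) hξ' hξ'' (hgeo 3)
  simp (disch := decide) only [Fin.sum_univ_four, coordPDeriv_two_schwDiag_three,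
    coordPDeriv_two_schwDiag_of_ne, coordPDeriv_schwDiag_of_ne] at hpφ hpψ
  have hsin2 := ((hasDerivWithinAt_pi.mp hξ' 2).sin).pow 2
  refine ((hpφ.pow 2).add ((hpψ.pow 2).div hsin2 (pow_ne_zero 2 hsin))).congr_deriv ?_
  simp only [schwDiag, cons_val, Pi.pow_apply]
  field_simp
  ring

end Schwarzschild

theorem schwarzschild_geodesic_first_integrals_general
    (R : ℝ) (hR : 0 < R) (I : Set ℝ) (hI : I.OrdConnected)
    (ξ ξ' ξ'' : ℝ → Fin 4 → ℝ)
    (hmem : ∀ s ∈ I, ξ s ∈ sphDomain R)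
    (hξ' : ∀ s ∈ I, HasDerivWithinAt ξ (ξ' s) I s)
    (hξ'' : ∀ s ∈ I, HasDerivWithinAt ξ' (ξ'' s) I s)
    (hgeo : ∀ s ∈ I, ∀ k : Fin 4,
      ξ'' s k + ∑ i, ∑ j, christoffel (schwMetric R) k i j (ξ s) * ξ' s i * ξ' s j = 0) :
    ∀ s ∈ I, ∀ s' ∈ I,
      (1 - R / ξ s 1) * ξ' s 0 = (1 - R / ξ s' 1) * ξ' s' 0 ∧
      (ξ s 1) ^ 2 * Real.sqrt ((ξ' s 2) ^ 2 + Real.sin (ξ s 2) ^ 2 * (ξ' s 3) ^ 2)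
        = (ξ s' 1) ^ 2 *
          Real.sqrt ((ξ' s' 2) ^ 2 + Real.sin (ξ s' 2) ^ 2 * (ξ' s' 3) ^ 2) := by
  intro s hs s' hs'
  constructor
  · exact hI.eq_of_hasDerivWithinAt_zero (fun t ht => hasDerivWithinAt_schw_energy hR
      (hmem t ht) (hξ' t ht) (hξ'' t ht) (hgeo t ht 0)) hs hs'
  · rw [sq_mul_sqrt_eq_sqrt_schwAngularMomentumSq (R := R),
      sq_mul_sqrt_eq_sqrt_schwAngularMomentumSq (R := R)]
    exact congrArg _ (hI.eq_of_hasDerivWithinAt_zero (fun t ht =>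
      hasDerivWithinAt_schwAngularMomentumSq hR (hmem t ht) (hξ' t ht) (hξ'' t ht) (hgeo t ht))
      hs hs')

/-- Along any C² geodesic `ξ = (t, r, φ, ψ)` of the Schwarzschild metric with values
in the chart `Ω_sph`, the functions `a = (1 − R/r)·ṫ` and
`b = r²·√(φ̇² + sin²φ·ψ̇²)` are constant. -/
theorem schwarzschild_geodesic_first_integrals
    (R : ℝ) (hR : 0 < R) (I : Set ℝ) (hI : I.OrdConnected)
    (ξ ξ' ξ'' : ℝ → Fin 4 → ℝ)
    (hmem : ∀ s ∈ I, ξ s ∈ sphDomain R)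
    (hξ' : ∀ s ∈ I, HasDerivWithinAt ξ (ξ' s) I s)
    (hξ'' : ∀ s ∈ I, HasDerivWithinAt ξ' (ξ'' s) I s)
    (hC2 : ContinuousOn ξ'' I)
    (hgeo : ∀ s ∈ I, ∀ k : Fin 4,
      ξ'' s k + ∑ i, ∑ j, christoffel (schwMetric R) k i j (ξ s) * ξ' s i * ξ' s j = 0) :
    ∀ s ∈ I, ∀ s' ∈ I,
      (1 - R / ξ s 1) * ξ' s 0 = (1 - R / ξ s' 1) * ξ' s' 0 ∧
      (ξ s 1) ^ 2 * Real.sqrt ((ξ' s 2) ^ 2 + Real.sin (ξ s 2) ^ 2 * (ξ' s 3) ^ 2)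
        = (ξ s' 1) ^ 2 *
          Real.sqrt ((ξ' s' 2) ^ 2 + Real.sin (ξ s' 2) ^ 2 * (ξ' s' 3) ^ 2) :=
  schwarzschild_geodesic_first_integrals_general R hR I hI ξ ξ' ξ'' hmem hξ' hξ'' hgeo

end
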